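/- For all vectors u, v ∈ ℝ^7: |u × v|² = |u ∧ v|² = |u|²|v|² − ⟨u,v⟩². -/
import Mathlib


open scoped BigOperators

noncomputable section

namespace G2Paper

/-- The vector space `ℝ^7`. -/
abbrev V : Type := Fin 7 → ℝ

/-- Alternating `k`-forms on `ℝ^7`. -/
abbrev Form (k : ℕ) : Type := AlternatingMap ℝ V ℝ (Fin k)

/-- The standard inner product on `ℝ^7`. -/
def ip (u v : V) : ℝ := ∑ i, u i * v i

/-- The standard basis vectors of `ℝ^7`. -/
def e (i : Fin 7) : V := fun j => if j = i then 1 else 0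

/-- The wedge product of alternating forms (determinant/shuffle convention). -/
def wedge {k l : ℕ} (α : Form k) (β : Form l) : Form (k + l) :=
  AlternatingMap.domDomCongr finSumFinEquiv
    ((TensorProduct.lid ℝ ℝ).toLinearMap.compAlternatingMap (AlternatingMap.domCoprod α β))

/-- A linear functional as a `1`-form. -/
def oneForm (ξ : V →ₗ[ℝ] ℝ) : Form 1 :=
  AlternatingMap.ofSubsingleton ℝ V ℝ (0 : Fin 1) ξ

/-- The dual basis `1`-forms `e^i`. -/
def E (i : Fin 7) : Form 1 := oneForm (LinearMap.proj i)

/-- The metric dual `1`-form `u♭` of a vector `u`. -/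
def flat (u : V) : Form 1 := oneForm (∑ i, u i • LinearMap.proj i)

/-- The metric dual vector `ξ♯` of a `1`-form `ξ`. -/
def sharp (ξ : Form 1) : V := fun i => ξ ![e i]

/-- The interior product (contraction in the first argument); by convention it is `0`
on `0`-forms. -/
def iprod (u : V) : {k : ℕ} → Form k → Form (k - 1)
  | 0, _ => 0
  | _ + 1, α => α.curryLeft u

/-- The standard G₂ 3-form `φ` on `ℝ^7` (indices shifted from 1..7 to 0..6). -/
def phi : Form 3 :=
  wedge (wedge (E 0) (E 1)) (E 2) - wedge (wedge (E 0) (E 5)) (E 6)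
    - wedge (wedge (E 4) (E 1)) (E 6) - wedge (wedge (E 4) (E 5)) (E 2)
    + wedge (wedge (E 3) (E 0)) (E 4) + wedge (wedge (E 3) (E 1)) (E 5)
    + wedge (wedge (E 3) (E 2)) (E 6)

/-- The volume form `e^1 ∧ ⋯ ∧ e^7`. -/
def vol : Form 7 :=
  wedge (wedge (wedge (wedge (wedge (wedge (E 0) (E 1)) (E 2)) (E 3)) (E 4)) (E 5)) (E 6)

/-- The inner product on `k`-forms induced by the standard inner product,
making the increasing wedges of dual basis elements orthonormal. -/
def innerForm {k : ℕ} (α β : Form k) : ℝ :=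
  (k.factorial : ℝ)⁻¹ *
    ∑ f : Fin k → Fin 7, (α fun j => e (f j)) * (β fun j => e (f j))

/-- The cross product `u × v`, characterized by `(u × v)♭ = v ⌟ (u ⌟ φ)`. -/
def cross (u v : V) : V := sharp (iprod v (iprod u phi))

/-- Transporting a `k`-form along an equality of degrees. -/
def castForm {k l : ℕ} (h : k = l) (α : Form k) : Form l :=
  α.domDomCongr (finCongr h)


lemma wedge_apply {k l : ℕ} (α : Form k) (β : Form l) (v : Fin (k+l) → V) :
    (k.factorial * l.factorial : ℝ) * wedge α β v =
      ∑ σ : Equiv.Perm (Fin k ⊕ Fin l), (Equiv.Perm.sign σ : ℝ) *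
        ((α fun i => v (finSumFinEquiv (σ (Sum.inl i)))) *
         (β fun i => v (finSumFinEquiv (σ (Sum.inr i))))) := by
  have h := MultilinearMap.domCoprod_alternization_eq α β
  have h2 := congrArg (fun M => (TensorProduct.lid ℝ ℝ).toLinearMap (M (v ∘ finSumFinEquiv))) h
  simp only [MultilinearMap.alternatization_apply, MultilinearMap.smul_apply,
    MultilinearMap.sum_apply, map_sum, MultilinearMap.domDomCongr_apply,
    MultilinearMap.domCoprod_apply, Function.comp] at h2
  simp only [Units.smul_def, ← Int.cast_smul_eq_zsmul ℝ, ← Nat.cast_smul_eq_nsmul ℝ, map_smul, AlternatingMap.smul_apply,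
    TensorProduct.lid_tmul, smul_eq_mul, LinearEquiv.coe_coe, Fintype.card_fin] at h2
  have hw : (wedge α β) v =
      (TensorProduct.lid ℝ ℝ) ((AlternatingMap.domCoprod α β) (v ∘ ⇑finSumFinEquiv)) := rfl
  rw [hw]
  push_cast at h2
  linarith [h2]

lemma E_apply (i : Fin 7) (w : Fin 1 → V) : E i w = w 0 i := rfl

lemma form1_congr (α : Form 1) (f : Fin 1 → V) : α f = α ![f 0] := by
  congr; funext i; fin_cases i; rfl

lemma wedge11 (α β : Form 1) (x y : V) :
    wedge α β ![x, y] = α ![x] * β ![y] - α ![y] * β ![x] := by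
  have h := wedge_apply α β ![x, y]
  simp only [Nat.factorial_one, Nat.cast_one, one_mul] at h
  rw [h]
  rw [show (Finset.univ : Finset (Equiv.Perm (Fin 1 ⊕ Fin 1))) =
    {Equiv.refl _, Equiv.swap (Sum.inl 0) (Sum.inr 0)} from by decide]
  rw [Finset.sum_insert (by decide), Finset.sum_singleton]
  rw [Equiv.Perm.sign_swap (by decide)]
  simp only [Equiv.refl_apply, Equiv.swap_apply_left, Equiv.swap_apply_right,
    Equiv.Perm.sign_refl, form1_congr α, form1_congr β,
    show finSumFinEquiv (Sum.inl 0 : Fin 1 ⊕ Fin 1) = 0 from rfl,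
    show finSumFinEquiv (Sum.inr 0 : Fin 1 ⊕ Fin 1) = 1 from rfl,
    Matrix.cons_val_zero, Matrix.cons_val_one, Matrix.head_cons]
  simp only [Matrix.cons_val_zero]
  push_cast
  ring

lemma form2_congr (α : Form 2) (f : Fin 2 → V) : α f = α ![f 0, f 1] := by
  congr; funext i; fin_cases i <;> rfl

lemma form2_swap (α : Form 2) (x y : V) : α ![y, x] = - α ![x, y] := by
  have h := α.map_swap ![x, y] (i := 0) (j := 1) (by decide)
  rw [show (![x, y] ∘ Equiv.swap (0:Fin 2) 1) = ![y, x] from by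
    funext i; fin_cases i <;> rfl] at h
  linarith

lemma wedge21 (α : Form 2) (β : Form 1) (x y z : V) :
    wedge α β ![x, y, z] = α ![x, y] * β ![z] - α ![x, z] * β ![y] + α ![y, z] * β ![x] := by
  have h := wedge_apply α β ![x, y, z]
  norm_num [Nat.factorial] at h
  rw [show (Finset.univ : Finset (Equiv.Perm (Fin 2 ⊕ Fin 1))) =
    {Equiv.refl _, Equiv.swap (Sum.inl 0) (Sum.inl 1), Equiv.swap (Sum.inl 0) (Sum.inr 0),
     Equiv.swap (Sum.inl 1) (Sum.inr 0),
     Equiv.swap (Sum.inl 0) (Sum.inl 1) * Equiv.swap (Sum.inl 0) (Sum.inr 0),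
     Equiv.swap (Sum.inl 0) (Sum.inr 0) * Equiv.swap (Sum.inl 0) (Sum.inl 1)} from by decide]
    at h
  rw [Finset.sum_insert (by decide), Finset.sum_insert (by decide), Finset.sum_insert (by decide),
    Finset.sum_insert (by decide), Finset.sum_insert (by decide), Finset.sum_singleton] at h
  simp only [Equiv.Perm.mul_apply] at h
  simp only [show (fun i => ![x,y,z] (finSumFinEquiv ((Equiv.refl (Fin 2 ⊕ Fin 1)) (Sum.inl i)))) = ![x, y] from by funext i; fin_cases i <;> rfl,
    show (fun i => ![x,y,z] (finSumFinEquiv ((Equiv.refl (Fin 2 ⊕ Fin 1)) (Sum.inr i)))) = ![z] from by funext i; fin_cases i <;> rfl,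
    show Equiv.Perm.sign (Equiv.refl (Fin 2 ⊕ Fin 1)) = 1 from by decide,
    show (fun i => ![x,y,z] (finSumFinEquiv ((Equiv.swap (Sum.inl 0 : Fin 2 ⊕ Fin 1) (Sum.inl 1)) (Sum.inl i)))) = ![y, x] from by funext i; fin_cases i <;> rfl,
    show (fun i => ![x,y,z] (finSumFinEquiv ((Equiv.swap (Sum.inl 0 : Fin 2 ⊕ Fin 1) (Sum.inl 1)) (Sum.inr i)))) = ![z] from by funext i; fin_cases i <;> rfl,
    show Equiv.Perm.sign (Equiv.swap (Sum.inl 0 : Fin 2 ⊕ Fin 1) (Sum.inl 1)) = -1 from by decide,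
    show (fun i => ![x,y,z] (finSumFinEquiv ((Equiv.swap (Sum.inl 0 : Fin 2 ⊕ Fin 1) (Sum.inr 0)) (Sum.inl i)))) = ![z, y] from by funext i; fin_cases i <;> rfl,
    show (fun i => ![x,y,z] (finSumFinEquiv ((Equiv.swap (Sum.inl 0 : Fin 2 ⊕ Fin 1) (Sum.inr 0)) (Sum.inr i)))) = ![x] from by funext i; fin_cases i <;> rfl,
    show Equiv.Perm.sign (Equiv.swap (Sum.inl 0 : Fin 2 ⊕ Fin 1) (Sum.inr 0)) = -1 from by decide,
    show (fun i => ![x,y,z] (finSumFinEquiv ((Equiv.swap (Sum.inl 1 : Fin 2 ⊕ Fin 1) (Sum.inr 0)) (Sum.inl i)))) = ![x, z] from by funext i; fin_cases i <;> rfl,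
    show (fun i => ![x,y,z] (finSumFinEquiv ((Equiv.swap (Sum.inl 1 : Fin 2 ⊕ Fin 1) (Sum.inr 0)) (Sum.inr i)))) = ![y] from by funext i; fin_cases i <;> rfl,
    show Equiv.Perm.sign (Equiv.swap (Sum.inl 1 : Fin 2 ⊕ Fin 1) (Sum.inr 0)) = -1 from by decide,
    show (fun i => ![x,y,z] (finSumFinEquiv ((Equiv.swap (Sum.inl 0 : Fin 2 ⊕ Fin 1) (Sum.inl 1)) ((Equiv.swap (Sum.inl 0 : Fin 2 ⊕ Fin 1) (Sum.inr 0)) (Sum.inl i))))) = ![z, x] from by funext i; fin_cases i <;> rfl,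
    show (fun i => ![x,y,z] (finSumFinEquiv ((Equiv.swap (Sum.inl 0 : Fin 2 ⊕ Fin 1) (Sum.inl 1)) ((Equiv.swap (Sum.inl 0 : Fin 2 ⊕ Fin 1) (Sum.inr 0)) (Sum.inr i))))) = ![y] from by funext i; fin_cases i <;> rfl,
    show Equiv.Perm.sign ((Equiv.swap (Sum.inl 0 : Fin 2 ⊕ Fin 1) (Sum.inl 1)) * (Equiv.swap (Sum.inl 0 : Fin 2 ⊕ Fin 1) (Sum.inr 0))) = 1 from by decide,
    show (fun i => ![x,y,z] (finSumFinEquiv ((Equiv.swap (Sum.inl 0 : Fin 2 ⊕ Fin 1) (Sum.inr 0)) ((Equiv.swap (Sum.inl 0 : Fin 2 ⊕ Fin 1) (Sum.inl 1)) (Sum.inl i))))) = ![y, z] from by funext i; fin_cases i <;> rfl,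
    show (fun i => ![x,y,z] (finSumFinEquiv ((Equiv.swap (Sum.inl 0 : Fin 2 ⊕ Fin 1) (Sum.inr 0)) ((Equiv.swap (Sum.inl 0 : Fin 2 ⊕ Fin 1) (Sum.inl 1)) (Sum.inr i))))) = ![x] from by funext i; fin_cases i <;> rfl,
    show Equiv.Perm.sign ((Equiv.swap (Sum.inl 0 : Fin 2 ⊕ Fin 1) (Sum.inr 0)) * (Equiv.swap (Sum.inl 0 : Fin 2 ⊕ Fin 1) (Sum.inl 1))) = 1 from by decide] at h
  rw [form2_swap α x y, form2_swap α y z, form2_swap α x z] at h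
  norm_num at h
  linarith

lemma tripleE (a b c : Fin 7) (x y z : V) :
    wedge (wedge (E a) (E b)) (E c) ![x, y, z] =
      (x a * y b - y a * x b) * z c - (x a * z b - z a * x b) * y c
        + (y a * z b - z a * y b) * x c := by
  rw [wedge21, wedge11, wedge11, wedge11]
  simp [E_apply]

lemma cross_apply (u v : V) (i : Fin 7) : cross u v i = phi ![u, v, e i] := rfl

lemma phi_apply (x y z : V) :
    phi ![x, y, z] =
      ((x 0 * y 1 - y 0 * x 1) * z 2 - (x 0 * z 1 - z 0 * x 1) * y 2
        + (y 0 * z 1 - z 0 * y 1) * x 2)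
      - ((x 0 * y 5 - y 0 * x 5) * z 6 - (x 0 * z 5 - z 0 * x 5) * y 6
        + (y 0 * z 5 - z 0 * y 5) * x 6)
      - ((x 4 * y 1 - y 4 * x 1) * z 6 - (x 4 * z 1 - z 4 * x 1) * y 6
        + (y 4 * z 1 - z 4 * y 1) * x 6)
      - ((x 4 * y 5 - y 4 * x 5) * z 2 - (x 4 * z 5 - z 4 * x 5) * y 2
        + (y 4 * z 5 - z 4 * y 5) * x 2)
      + ((x 3 * y 0 - y 3 * x 0) * z 4 - (x 3 * z 0 - z 3 * x 0) * y 4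
        + (y 3 * z 0 - z 3 * y 0) * x 4)
      + ((x 3 * y 1 - y 3 * x 1) * z 5 - (x 3 * z 1 - z 3 * x 1) * y 5
        + (y 3 * z 1 - z 3 * y 1) * x 5)
      + ((x 3 * y 2 - y 3 * x 2) * z 6 - (x 3 * z 2 - z 3 * x 2) * y 6
        + (y 3 * z 2 - z 3 * y 2) * x 6) := by
  simp only [phi, AlternatingMap.sub_apply, AlternatingMap.add_apply, tripleE]

lemma crossc0 (u v : V) : cross u v 0 = (u 1 * v 2 - v 1 * u 2) - (u 5 * v 6 - v 5 * u 6) - (u 3 * v 4 - v 3 * u 4) := by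
  rw [cross_apply, phi_apply]; simp (config := { decide := true }) only [e]; norm_num; try ring

lemma crossc1 (u v : V) : cross u v 1 = -(u 0 * v 2 - v 0 * u 2) + (u 4 * v 6 - v 4 * u 6) - (u 3 * v 5 - v 3 * u 5) := by
  rw [cross_apply, phi_apply]; simp (config := { decide := true }) only [e]; norm_num; try ring

lemma crossc2 (u v : V) : cross u v 2 = (u 0 * v 1 - v 0 * u 1) - (u 4 * v 5 - v 4 * u 5) - (u 3 * v 6 - v 3 * u 6) := by
  rw [cross_apply, phi_apply]; simp (config := { decide := true }) only [e]; norm_num; try ring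

lemma crossc3 (u v : V) : cross u v 3 = (u 0 * v 4 - v 0 * u 4) + (u 1 * v 5 - v 1 * u 5) + (u 2 * v 6 - v 2 * u 6) := by
  rw [cross_apply, phi_apply]; simp (config := { decide := true }) only [e]; norm_num; try ring

lemma crossc4 (u v : V) : cross u v 4 = -(u 1 * v 6 - v 1 * u 6) - (u 5 * v 2 - v 5 * u 2) + (u 3 * v 0 - v 3 * u 0) := by
  rw [cross_apply, phi_apply]; simp (config := { decide := true }) only [e]; norm_num; try ring

lemma crossc5 (u v : V) : cross u v 5 = (u 0 * v 6 - v 0 * u 6) + (u 4 * v 2 - v 4 * u 2) + (u 3 * v 1 - v 3 * u 1) := by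
  rw [cross_apply, phi_apply]; simp (config := { decide := true }) only [e]; norm_num; try ring

lemma crossc6 (u v : V) : cross u v 6 = -(u 0 * v 5 - v 0 * u 5) - (u 4 * v 1 - v 4 * u 1) + (u 3 * v 2 - v 3 * u 2) := by
  rw [cross_apply, phi_apply]; simp (config := { decide := true }) only [e]; norm_num; try ring

/-- Lemma "Gcrossproductnormlemma": `|u × v|² = |u ∧ v|² = |u|²|v|² − ⟨u,v⟩²`. -/
theorem statement4 (u v : V) :
    ip (cross u v) (cross u v) = ip u u * ip v v - ip u v ^ 2 := by
  simp only [ip, Fin.sum_univ_seven, crossc0, crossc1, crossc2, crossc3, crossc4, crossc5,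
    crossc6]
  ring

end G2Paper
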